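/- arXiv:1304.5781 — 10 statements merged into one kernel-verified Lean document; each statement's English description precedes it below -/
import Mathlib

section
/- Let E and k be natural numbers with 2 ≤ k ≤ E. Then, as an identity of integers, ∑_{i=0}^{k−2} (−1)^i · C(E, i) · γ(k−i, E−i) = (−1)^k · C(E−1, k). -/
/-- `γ(m, F) = F·C(F−1, m−1) − C(F+1, m) + 1`, the first Betti number of the
`m`-particle combinatorial configuration space of the non-subdivided star graph
with `F` edges. -/
def gammaStar (m F : ℕ) : ℤ :=
  (F : ℤ) * ((F - 1).choose (m - 1)) - ((F + 1).choose m) + 1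

/-!
Multiplying by `C(E, i)`, each of the three binomial terms of `γ(k − i, E − i)` becomes
a combination of `C(k, i)`, `C(k − 1, i)` and `C(E, i)` with coefficients independent of `i`
(via `C(E, i) C(E − i, k − i) = C(E, k) C(k, i)`). The alternating partial sums
`∑_{i ≤ m} (−1)^i C(n + 1, i) = (−1)^m C(n, m)` then collapse the sum over `i ≤ k − 2`,
and Pascal's rule turns what is left into `(−1)^k C(E − 1, k)`.
-/

namespace Nat

theorem mul_choose_sub_one_sub_one (n : ℕ) {k : ℕ} (hk : 0 < k) :
    n * (n - 1).choose (k - 1) = k * n.choose k := by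
  obtain ⟨k, rfl⟩ := Nat.exists_eq_add_of_lt hk
  cases n with
  | zero => simp
  | succ n => simpa [Nat.mul_comm k.succ] using add_one_mul_choose_eq n k

theorem choose_mul_sub_mul_choose_sub_one {E k i : ℕ} (hik : i < k) :
    E.choose i * ((E - i) * (E - i - 1).choose (k - i - 1)) = E.choose k * (k * (k - 1).choose i) := by
  have hpascal : (k - 1).choose i * k = k.choose i * (k - i) := by
    simpa [Nat.sub_add_cancel (Nat.one_le_of_lt hik)] using choose_mul_succ_eq (k - 1) i
  rw [mul_choose_sub_one_sub_one _ (Nat.sub_pos_of_lt hik), Nat.mul_left_comm,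
    ← choose_mul hik.le, Nat.mul_comm k, hpascal]
  ring

theorem choose_mul_choose_sub_add_one {E k i : ℕ} (hik : i < k) :
    E.choose i * (E - i + 1).choose (k - i)
      = E.choose k * k.choose i + E.choose (k - 1) * (k - 1).choose i := by
  have hki : k - i = k - 1 - i + 1 := by omega
  rw [hki, choose_succ_succ', Nat.mul_add, ← hki, ← choose_mul hik.le,
    ← choose_mul (Nat.le_sub_one_of_lt hik), Nat.add_comm]

end Nat

theorem choose_mul_gammaStar {E k i : ℕ} (hik : i < k) :
    (E.choose i : ℤ) * gammaStar (k - i) (E - i)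
      = (k * E.choose k - E.choose (k - 1)) * (k - 1).choose i - E.choose k * k.choose i
        + E.choose i := by
  have hfirst : (E.choose i : ℤ) * ((E - i : ℕ) * (E - i - 1).choose (k - i - 1))
      = E.choose k * (k * (k - 1).choose i) := by
    exact_mod_cast Nat.choose_mul_sub_mul_choose_sub_one hik
  have hsecond : (E.choose i : ℤ) * (E - i + 1).choose (k - i)
      = E.choose k * k.choose i + E.choose (k - 1) * (k - 1).choose i := by
    exact_mod_cast Nat.choose_mul_choose_sub_add_one hik
  rw [gammaStar]
  linear_combination hfirst - hsecond

/-- Lemma 4 of the paper: `α_k^E = (−1)^k · C(E−1, k)` where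
`α_k^E = ∑_{i=0}^{k−2} (−1)^i C(E,i) γ_{k−i}^{E−i}`. -/
theorem star_alpha_eq (E k : ℕ) (h2 : 2 ≤ k) (hkE : k ≤ E) :
    ∑ i ∈ Finset.range (k - 1),
        (-1 : ℤ) ^ i * (E.choose i) * gammaStar (k - i) (E - i)
      = (-1 : ℤ) ^ k * ((E - 1).choose k) := by
  obtain ⟨m, rfl⟩ : ∃ m, k = m + 2 := ⟨k - 2, by omega⟩
  obtain ⟨n, rfl⟩ : ∃ n, E = n + 1 := ⟨E - 1, by omega⟩
  have hterm : ∀ i ∈ Finset.range (m + 1),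
      (-1 : ℤ) ^ i * ((n + 1).choose i) * gammaStar (m + 2 - i) (n + 1 - i)
        = ((m + 2) * (n + 1).choose (m + 2) - (n + 1).choose (m + 1))
            * ((-1) ^ i * (m + 1).choose i)
          - (n + 1).choose (m + 2) * ((-1) ^ i * (m + 2).choose i)
          + (-1) ^ i * (n + 1).choose i := by
    intro i hi
    rw [mul_assoc, choose_mul_gammaStar (Nat.lt_succ_of_lt (Finset.mem_range.mp hi))]
    push_cast
    ring
  rw [show m + 2 - 1 = m + 1 by omega, Finset.sum_congr rfl hterm]
  simp only [Finset.sum_add_distrib, Finset.sum_sub_distrib, ← Finset.mul_sum,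
    Int.alternating_sum_range_choose_eq_choose, Nat.choose_self, Nat.choose_succ_self_right,
    add_tsub_cancel_right]
  have hpascal₁ := Nat.choose_succ_succ' n (m + 1)
  have hpascal₂ := Nat.choose_succ_succ' n m
  push_cast [hpascal₁, hpascal₂]
  ring
end

section
/- For all natural numbers E ≥ 2 and n ≥ 2, ∑_{k=2}^{E−1} (−1)^k · C(E−1, k) · C(n+E−1−k, E−1) = (E−2)·C(n+E−2, E−1) − C(n+E−2, E−2) + 1, as an identity of integers. -/
/-!
The full alternating sum over `0 ≤ k ≤ E - 1` is the `(E - 1)`-th finite difference of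
`x ↦ C(x, E - 1)`, which is identically `1`. Removing the terms `k = 0, 1` and applying Pascal's
rule once gives the closed form.
-/

open Finset

theorem sum_range_alternating_choose_mul_choose_add_sub (m y : ℕ) :
    ∑ k ∈ range (m + 1), (-1 : ℤ) ^ k * m.choose k * (y + m - k).choose m = 1 := by
  have h := fwdDiff_iter_eq_sum_shift 1 (fun x ↦ (x.choose (m + 0) : ℤ)) m y
  rw [fwdDiff_iter_choose] at h
  simp only [Nat.choose_zero_right, Nat.cast_one, add_zero, smul_eq_mul, mul_one] at h
  rw [← sum_range_reflect]
  refine (sum_congr rfl fun k hk ↦ ?_).trans h.symm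
  have hk : k ≤ m := Nat.lt_succ_iff.mp (mem_range.mp hk)
  rw [add_tsub_cancel_right, Nat.choose_symm hk, show y + m - (m - k) = y + k by omega]

theorem star_beta_closed_form_general (E n : ℕ) (hE : 2 ≤ E) :
    ∑ k ∈ Finset.Icc 2 (E - 1),
        (-1 : ℤ) ^ k * ((E - 1).choose k) * ((n + E - 1 - k).choose (E - 1))
      = ((E : ℤ) - 2) * ((n + E - 2).choose (E - 1)) - ((n + E - 2).choose (E - 2)) + 1 := by
  obtain ⟨m, rfl⟩ : ∃ m, E = m + 2 := ⟨E - 2, by omega⟩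
  simp only [show n + (m + 2) - 1 = n + (m + 1) by omega, show n + (m + 2) - 2 = n + m by omega,
    show m + 2 - 1 = m + 1 by omega, Nat.add_sub_cancel]
  have hsplit := sum_range_add_sum_Ico
    (fun k ↦ (-1 : ℤ) ^ k * (m + 1).choose k * (n + (m + 1) - k).choose (m + 1))
    (show 2 ≤ m + 1 + 1 by omega)
  rw [sum_range_alternating_choose_mul_choose_add_sub, Ico_add_one_right_eq_Icc] at hsplit
  simp only [sum_range_succ, sum_range_zero, Nat.choose_zero_right, Nat.choose_one_right,
    Nat.sub_zero, show n + (m + 1) - 1 = n + m by omega] at hsplit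
  have hpascal : ((n + (m + 1)).choose (m + 1) : ℤ) = (n + m).choose m + (n + m).choose (m + 1) :=
    mod_cast Nat.choose_succ_succ (n + m) m
  push_cast at hsplit ⊢
  linear_combination hsplit - hpascal

/-- Closed-form evaluation of `β_n^E`, the number of independent anyon phases for
`n` particles on a star graph with `E` edges:
`∑_{k=2}^{E−1} (−1)^k C(E−1,k) C(n+E−1−k, E−1) = (E−2)·C(n+E−2, E−1) − C(n+E−2, E−2) + 1`. -/
theorem star_beta_closed_form (E n : ℕ) (hE : 2 ≤ E) (hn : 2 ≤ n) :
    ∑ k ∈ Finset.Icc 2 (E - 1),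
        (-1 : ℤ) ^ k * ((E - 1).choose k) * ((n + E - 1 - k).choose (E - 1))
      = ((E : ℤ) - 2) * ((n + E - 2).choose (E - 1)) - ((n + E - 2).choose (E - 2)) + 1 :=
  star_beta_closed_form_general E n hE
end

section
/- For all natural numbers E ≥ 2 and n ≥ 2, ∑_{k=2}^{E−1} C(n+E−1−k, E−1) · ( ∑_{i=0}^{k−2} (−1)^i · C(E, i) · γ(k−i, E−i) ) = (E−2)·C(n+E−2, E−1) − C(n+E−2, E−2) + 1, as an identity of integers. -/
open Finset

theorem alternating_sum_range_choose_mul_choose_sub (e j m : ℕ) (hm : m ≤ j + 1) :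
    ∑ i ∈ range (m + 1), (-1 : ℤ) ^ i * e.choose i * (e - i).choose (j + 1 - i)
      = (-1) ^ m * e.choose (j + 1) * j.choose m := by
  calc ∑ i ∈ range (m + 1), (-1 : ℤ) ^ i * e.choose i * (e - i).choose (j + 1 - i)
      = e.choose (j + 1) * ∑ i ∈ range (m + 1), (-1 : ℤ) ^ i * (j + 1).choose i := by
        rw [mul_sum]
        refine sum_congr rfl fun i hi => ?_
        have hij : i ≤ j + 1 := by grind
        rw [mul_assoc, ← Nat.cast_mul, ← Nat.choose_mul hij]
        push_cast
        ring
    _ = (-1) ^ m * e.choose (j + 1) * j.choose m := by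
        rw [Int.alternating_sum_range_choose_eq_choose]
        ring

theorem alternating_sum_range_choose_mul_choose_add_sub (r j x : ℕ) :
    ∑ k ∈ range (r + 1), (-1 : ℤ) ^ k * r.choose k * (x + r - k).choose (r + j) = x.choose j := by
  have hdiff := fwdDiff_iter_eq_sum_shift 1 (fun y : ℕ => (y.choose (r + j) : ℤ)) r x
  simp only [fwdDiff_iter_choose] at hdiff
  rw [hdiff, ← sum_range_reflect]
  refine sum_congr rfl fun k hk => ?_
  have hkr : k ≤ r := by grind
  rw [Nat.add_sub_cancel, Nat.choose_symm hkr, show x + r - (r - k) = x + k by omega]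
  simp

theorem gammaStar_of_ne_zero (m F : ℕ) (hm : m ≠ 0) :
    gammaStar m F = F * (F - 1).choose (m - 1) - F.choose m - F.choose (m - 1) + 1 := by
  obtain ⟨m, rfl⟩ : ∃ m', m = m' + 1 := ⟨m - 1, by omega⟩
  simp only [gammaStar, Nat.add_sub_cancel, Nat.choose_succ_succ', Nat.cast_add]
  ring

/-- The paper's `α_k^E`. -/
def alphaStar (k E : ℕ) : ℤ :=
  ∑ i ∈ range (k - 1), (-1 : ℤ) ^ i * E.choose i * gammaStar (k - i) (E - i)

theorem alphaStar_succ (k e : ℕ) (hk : 2 ≤ k) : alphaStar k (e + 1) = (-1) ^ k * e.choose k := by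
  obtain ⟨m, rfl⟩ : ∃ m, k = m + 2 := ⟨k - 2, by omega⟩
  have hterm : ∀ i ∈ range (m + 1),
      (-1 : ℤ) ^ i * (e + 1).choose i * gammaStar (m + 2 - i) (e + 1 - i)
        = (e + 1) * ((-1) ^ i * e.choose i * (e - i).choose (m + 1 - i))
          - (-1) ^ i * (e + 1).choose i * (e + 1 - i).choose (m + 1 + 1 - i)
          - (-1) ^ i * (e + 1).choose i * (e + 1 - i).choose (m + 1 - i)
          + (-1) ^ i * (e + 1).choose i := by
    intro i hi
    have him : i ≤ m := by grind
    have hcoef : ((e + 1).choose i * (e + 1 - i : ℕ) : ℤ) = (e + 1) * e.choose i := by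
      exact_mod_cast (Nat.choose_mul_succ_eq e i).symm.trans (mul_comm _ _)
    rw [gammaStar_of_ne_zero _ _ (by omega), show e + 1 - i - 1 = e - i by omega,
      show m + 2 - i - 1 = m + 1 - i by omega, show m + 1 + 1 - i = m + 2 - i by omega]
    linear_combination (-1 : ℤ) ^ i * (e - i).choose (m + 1 - i) * hcoef
  have habsorb : ((e + 1 : ℕ) : ℤ) * e.choose (m + 1) = (e + 1).choose (m + 2) * (m + 2) := by
    exact_mod_cast Nat.add_one_mul_choose_eq e (m + 1)
  have hpascal : ((e + 1).choose (m + 2) : ℤ) = e.choose (m + 1) + e.choose (m + 2) := by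
    exact_mod_cast Nat.choose_succ_succ' e (m + 1)
  have hpascal' : ((e + 1).choose (m + 1) : ℤ) = e.choose m + e.choose (m + 1) := by
    exact_mod_cast Nat.choose_succ_succ' e m
  rw [alphaStar, show m + 2 - 1 = m + 1 by omega, sum_congr rfl hterm, sum_add_distrib,
    sum_sub_distrib, sum_sub_distrib, ← mul_sum,
    alternating_sum_range_choose_mul_choose_sub e m m (by omega),
    alternating_sum_range_choose_mul_choose_sub (e + 1) (m + 1) m (by omega),
    alternating_sum_range_choose_mul_choose_sub (e + 1) m m (by omega),
    Int.alternating_sum_range_choose_eq_choose, Nat.choose_self, Nat.choose_succ_self_right]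
  push_cast at habsorb ⊢
  linear_combination (-1 : ℤ) ^ m * (habsorb + hpascal - hpascal')

theorem star_beta_eval_general (E n : ℕ) (hE : 2 ≤ E) :
    ∑ k ∈ Finset.Icc 2 (E - 1),
        ((n + E - 1 - k).choose (E - 1) : ℤ) *
          (∑ i ∈ Finset.range (k - 1),
            (-1 : ℤ) ^ i * (E.choose i) * gammaStar (k - i) (E - i))
      = ((E : ℤ) - 2) * ((n + E - 2).choose (E - 1)) - ((n + E - 2).choose (E - 2)) + 1 := by
  obtain ⟨d, rfl⟩ : ∃ d, E = d + 2 := ⟨E - 2, by omega⟩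
  change ∑ k ∈ Icc 2 (d + 1), ((n + (d + 2) - 1 - k).choose (d + 1) : ℤ) * alphaStar k (d + 2) = _
  have hα : ∀ k ∈ Icc 2 (d + 1), ((n + (d + 2) - 1 - k).choose (d + 1) : ℤ) * alphaStar k (d + 2)
      = (-1) ^ k * (d + 1).choose k * (n + (d + 1) - k).choose (d + 1 + 0) := by
    intro k hk
    rw [alphaStar_succ k (d + 1) (mem_Icc.1 hk).1,
      show n + (d + 2) - 1 - k = n + (d + 1) - k by omega]
    ring
  have hfull := alternating_sum_range_choose_mul_choose_add_sub (d + 1) 0 n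
  rw [range_eq_Ico, ← sum_Ico_consecutive _ (Nat.zero_le 2) (by omega : 2 ≤ d + 1 + 1),
    Ico_add_one_right_eq_Icc, ← sum_congr rfl hα] at hfull
  simp only [← range_eq_Ico, sum_range_succ, sum_range_zero, Nat.choose_zero_right,
    Nat.choose_one_right, Nat.sub_zero, add_zero, show n + (d + 1) - 1 = n + d by omega] at hfull
  have hpascal : ((n + (d + 1)).choose (d + 1) : ℤ) = (n + d).choose d + (n + d).choose (d + 1) :=
    mod_cast Nat.choose_succ_succ' (n + d) d
  rw [show n + (d + 2) - 2 = n + d by omega]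
  push_cast at hfull ⊢
  linear_combination hfull - hpascal

/-- The paper's expression `β_n^E = ∑_{k=2}^{E−1} C(n−k+E−1, E−1)·α_k^E`, with
`α_k^E = ∑_{i=0}^{k−2} (−1)^i C(E,i) γ_{k−i}^{E−i}`, equals its closed form
`(E−2)·C(n+E−2, E−1) − C(n+E−2, E−2) + 1`. -/
theorem star_beta_eval (E n : ℕ) (hE : 2 ≤ E) (hn : 2 ≤ n) :
    ∑ k ∈ Finset.Icc 2 (E - 1),
        ((n + E - 1 - k).choose (E - 1) : ℤ) *
          (∑ i ∈ Finset.range (k - 1),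
            (-1 : ℤ) ^ i * (E.choose i) * gammaStar (k - i) (E - i))
      = ((E : ℤ) - 2) * ((n + E - 2).choose (E - 1)) - ((n + E - 2).choose (E - 2)) + 1 :=
  star_beta_eval_general E n hE
end

section
/- Let E and n be natural numbers with 1 ≤ n ≤ E. Then the n-particle configuration graph D^n(S̄_E) has exactly C(E+1, n) vertices and exactly E·C(E−1, n−1) edges. -/
open Finset

/-- The (non-subdivided) star graph `S̄_E` on `Fin (E+1)`: the hub `0` is adjacent
to each of the leaves `1, …, E`, and there are no other edges. -/
def starGraph (E : ℕ) : SimpleGraph (Fin (E + 1)) where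
  Adj v w := (v = 0 ∧ w ≠ 0) ∨ (w = 0 ∧ v ≠ 0)
  symm := by tauto
  loopless := by constructor; intro v h; tauto

/-- The `n`-particle combinatorial configuration graph `D^n(S̄_E)`: vertices are the
`n`-element subsets of `Fin (E+1)`, and `A` is adjacent to `B` iff their symmetric
difference is `{0, k}` for some leaf `k`. -/
def configGraph (E n : ℕ) : SimpleGraph {A : Finset (Fin (E + 1)) // A.card = n} where
  Adj A B := ∃ k : Fin (E + 1), k ≠ 0 ∧ symmDiff A.1 B.1 = {0, k}
  symm := by
    constructor
    rintro A B ⟨k, hk, h⟩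
    exact ⟨k, hk, by rwa [symmDiff_comm]⟩
  loopless := by
    constructor
    rintro A ⟨k, hk, h⟩
    rw [symmDiff_self] at h
    exact (Finset.insert_ne_empty 0 {k}) h.symm

/-!
Two configurations are adjacent exactly when they share an `(n-1)`-set `S` and differ by
one particle sitting at the hub in one of them and at a leaf `k ∉ S` in the other. Thus
every edge is `{S ∪ {0}, S ∪ {k}}` for a unique leaf `k` and a unique `(n-1)`-subset `S`
of the remaining `E - 1` leaves, which gives `E · C(E-1, n-1)` edges.
-/

namespace Finset

variable {α : Type*} [DecidableEq α] {s A B : Finset α} {a b : α}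

theorem symmDiff_insert_insert (ha : a ∉ s) (hb : b ∉ s) (hab : a ≠ b) :
    symmDiff (insert a s) (insert b s) = {a, b} := by
  ext x
  simp only [mem_symmDiff, mem_insert, mem_singleton]
  grind

/-- Since `#A = #B`, the sets `A \ B` and `B \ A` split `{a, b}` into two halves of equal size. -/
theorem exists_eq_insert_of_symmDiff_eq_pair (hAB : #A = #B) (hab : a ≠ b)
    (h : symmDiff A B = {a, b}) (ha : a ∈ A) :
    ∃ S, a ∉ S ∧ b ∉ S ∧ A = insert a S ∧ B = insert b S := by
  have hsplit : A \ B ∪ B \ A = {a, b} := h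
  have hsum : #(A \ B) + #(B \ A) = 2 := by
    rw [← card_union_of_disjoint disjoint_sdiff_sdiff, hsplit, card_pair hab]
  have hcard : #(A \ B) = #(B \ A) := card_sdiff_eq_card_sdiff_iff.2 hAB
  have hmem : ∀ x, x ∈ A \ B ∨ x ∈ B \ A ↔ x = a ∨ x = b := by
    simpa only [mem_union, mem_insert, mem_singleton] using Finset.ext_iff.1 hsplit
  have haA : a ∈ A \ B :=
    ((hmem a).2 (Or.inl rfl)).resolve_right fun haB => (mem_sdiff.1 haB).2 ha
  have hbB : b ∈ B \ A := by
    refine ((hmem b).2 (Or.inr rfl)).resolve_left fun hbA => hab ?_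
    exact card_le_one.1 (by omega) a haA b hbA
  have hA : A \ B = {a} :=
    eq_singleton_iff_unique_mem.2 ⟨haA, fun x hx => card_le_one.1 (by omega) x hx a haA⟩
  have hB : B \ A = {b} :=
    eq_singleton_iff_unique_mem.2 ⟨hbB, fun x hx => card_le_one.1 (by omega) x hx b hbB⟩
  refine ⟨A ∩ B, fun h' => (mem_sdiff.1 haA).2 (mem_inter.1 h').2,
    fun h' => (mem_sdiff.1 hbB).2 (mem_inter.1 h').1, ?_, ?_⟩
  · rw [insert_eq, ← hA, sdiff_union_inter]
  · rw [insert_eq, ← hB, inter_comm, sdiff_union_inter]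

end Finset

section StarEdgeCodes

variable {E n : ℕ}

/-- Codes `⟨k, S⟩` of the edges `{S ∪ {0}, S ∪ {k}}` of `D^n(S̄_E)`: a leaf `k` and the
common part `S`, an `(n-1)`-subset of the other leaves. -/
def starEdgeCodes (E n : ℕ) : Finset (Σ _ : Fin (E + 1), Finset (Fin (E + 1))) :=
  (univ.erase 0).sigma fun k => (univ \ {0, k}).powersetCard (n - 1)

def starEdgeOfCode (p : Σ _ : Fin (E + 1), Finset (Fin (E + 1))) : Sym2 (Finset (Fin (E + 1))) :=
  s(insert 0 p.2, insert p.1 p.2)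

theorem mem_starEdgeCodes {k : Fin (E + 1)} {S : Finset (Fin (E + 1))} :
    ⟨k, S⟩ ∈ starEdgeCodes E n ↔ k ≠ 0 ∧ 0 ∉ S ∧ k ∉ S ∧ #S = n - 1 := by
  simp only [starEdgeCodes, mem_sigma, mem_erase, mem_powersetCard, subset_sdiff,
    disjoint_insert_right, disjoint_singleton_right, subset_univ, mem_univ, and_true, true_and,
    and_assoc]

theorem card_starEdgeCodes (E n : ℕ) : #(starEdgeCodes E n) = E * (E - 1).choose (n - 1) := by
  rw [starEdgeCodes, card_sigma, sum_const_nat fun k hk => ?_, card_erase_of_mem (mem_univ 0),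
    card_univ, Fintype.card_fin, Nat.add_sub_cancel]
  rw [card_powersetCard, card_univ_sdiff, Fintype.card_fin, card_pair (ne_of_mem_erase hk).symm]
  rfl

theorem injOn_starEdgeOfCode : Set.InjOn (starEdgeOfCode (E := E)) (starEdgeCodes E n) := by
  rintro ⟨k, S⟩ hp ⟨k', S'⟩ hp' heq
  obtain ⟨hk, h0, hkS, -⟩ := mem_starEdgeCodes.1 hp
  obtain ⟨hk', h0', hkS', -⟩ := mem_starEdgeCodes.1 hp'
  rcases Sym2.eq_iff.1 heq with ⟨h0eq, hkeq⟩ | ⟨h0eq, -⟩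
  · obtain rfl : S = S' := by rw [← erase_insert h0, h0eq, erase_insert h0']
    obtain rfl : k = k' := (insert_inj hkS).1 hkeq
    rfl
  · have : (0 : Fin (E + 1)) ∈ insert k' S' := h0eq ▸ mem_insert_self 0 S
    exact ((mem_insert.1 this).elim (fun h => hk' h.symm) h0').elim

theorem exists_starEdgeOfCode_of_adj {A B : {A : Finset (Fin (E + 1)) // #A = n}}
    (hAB : (configGraph E n).Adj A B) (h0 : 0 ∈ A.1) :
    ∃ p ∈ starEdgeCodes E n, starEdgeOfCode p = s(A.1, B.1) := by
  obtain ⟨k, hk, hsymm⟩ := hAB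
  obtain ⟨S, h0S, hkS, hA, hB⟩ :=
    exists_eq_insert_of_symmDiff_eq_pair (A.2.trans B.2.symm) hk.symm hsymm h0
  have hS : #S = n - 1 := by
    have := A.2
    rw [hA, card_insert_of_notMem h0S] at this
    omega
  exact ⟨⟨k, S⟩, mem_starEdgeCodes.2 ⟨hk, h0S, hkS, hS⟩, by rw [starEdgeOfCode, hA, hB]⟩

theorem image_val_edgeSet_configGraph (hn : 1 ≤ n) :
    Sym2.map Subtype.val '' (configGraph E n).edgeSet =
      starEdgeOfCode (E := E) '' (starEdgeCodes E n) := by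
  ext z
  constructor
  · rintro ⟨e, he, rfl⟩
    induction e using Sym2.ind with
    | _ A B =>
      obtain ⟨k, hk, hsymm⟩ := id he
      by_cases h0 : 0 ∈ A.1
      · exact exists_starEdgeOfCode_of_adj he h0
      · have h0B : 0 ∈ B.1 := by
          have : (0 : Fin (E + 1)) ∈ symmDiff A.1 B.1 := hsymm ▸ mem_insert_self 0 {k}
          exact ((mem_symmDiff.1 this).resolve_left fun h => h0 h.1).1
        obtain ⟨p, hp, hpe⟩ := exists_starEdgeOfCode_of_adj he.symm h0B
        exact ⟨p, hp, hpe.trans Sym2.eq_swap⟩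
  · rintro ⟨⟨k, S⟩, hp, rfl⟩
    obtain ⟨hk, h0S, hkS, hS⟩ := mem_starEdgeCodes.1 hp
    refine ⟨s(⟨insert 0 S, ?_⟩, ⟨insert k S, ?_⟩), ⟨k, hk, ?_⟩, rfl⟩
    · rw [card_insert_of_notMem h0S]; omega
    · rw [card_insert_of_notMem hkS]; omega
    · exact symmDiff_insert_insert h0S hkS (Ne.symm hk)

end StarEdgeCodes

theorem configGraph_star_card_general (E n : ℕ) (hn : 1 ≤ n) :
    Fintype.card {A : Finset (Fin (E + 1)) // A.card = n} = (E + 1).choose n ∧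
    (configGraph E n).edgeSet.ncard = E * (E - 1).choose (n - 1) := by
  refine ⟨by simp, ?_⟩
  rw [← Set.ncard_image_of_injective _ (Sym2.map.injective Subtype.val_injective),
    image_val_edgeSet_configGraph hn, Set.InjOn.ncard_image injOn_starEdgeOfCode,
    Set.ncard_coe_finset, card_starEdgeCodes]

/-- `D^n(S̄_E)` has exactly `C(E+1, n)` vertices and `E·C(E−1, n−1)` edges. -/
theorem configGraph_star_card (E n : ℕ) (hn : 1 ≤ n) (hE : n ≤ E) :
    Fintype.card {A : Finset (Fin (E + 1)) // A.card = n} = (E + 1).choose n ∧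
    (configGraph E n).edgeSet.ncard = E * (E - 1).choose (n - 1) :=
  configGraph_star_card_general E n hn
end

section
/- The 2-particle configuration graph D^2(S̄_3) of the Y-graph (the star graph with 3 edges) is isomorphic as a simple graph to the cycle graph on 6 vertices. -/
open Finset

/-- The star graph `S̄_3` (Y-graph) on `Fin 4`: the hub `0` is adjacent to each of
the leaves `1, 2, 3`, and there are no other edges. -/
def starGraph3 : SimpleGraph (Fin 4) where
  Adj v w := (v = 0 ∧ w ≠ 0) ∨ (w = 0 ∧ v ≠ 0)
  symm := by tauto
  loopless := by constructor; intro v h; tauto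

/-- The 2-particle combinatorial configuration graph `D^2(S̄_3)`: vertices are the
`2`-element subsets of `Fin 4`, and `A` is adjacent to `B` iff their symmetric
difference is `{0, k}` for some leaf `k`. -/
def configGraphY : SimpleGraph {A : Finset (Fin 4) // A.card = 2} where
  Adj A B := ∃ k : Fin 4, k ≠ 0 ∧ symmDiff A.1 B.1 = {0, k}
  symm := by
    constructor
    rintro A B ⟨k, hk, h⟩
    exact ⟨k, hk, by rwa [symmDiff_comm]⟩
  loopless := by
    constructor
    rintro A ⟨k, hk, h⟩
    rw [symmDiff_self] at h
    exact (Finset.insert_ne_empty 0 {k}) h.symm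

/-! Each edge of `D^2(S̄_3)` moves one particle between the hub and a leaf, so configurations
`{0, k}` alternate with configurations of two leaves. Listing
`{0,1}, {1,2}, {0,2}, {2,3}, {0,3}, {1,3}` closes up into a hexagon, and there are no chords. -/

def hexagonVertex : Fin 6 → {A : Finset (Fin 4) // A.card = 2} :=
  ![⟨{0, 1}, rfl⟩, ⟨{1, 2}, rfl⟩, ⟨{0, 2}, rfl⟩, ⟨{2, 3}, rfl⟩, ⟨{0, 3}, rfl⟩, ⟨{1, 3}, rfl⟩]

theorem hexagonVertex_bijective : Function.Bijective hexagonVertex := by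
  decide

instance : DecidableRel configGraphY.Adj := fun _ _ =>
  Fintype.decidableExistsFintype

theorem configGraphY_adj_hexagonVertex_iff (i j : Fin 6) :
    configGraphY.Adj (hexagonVertex i) (hexagonVertex j) ↔ (SimpleGraph.cycleGraph 6).Adj i j := by
  revert i j
  decide

noncomputable def cycleGraphIsoConfigGraphY : SimpleGraph.cycleGraph 6 ≃g configGraphY where
  toEquiv := Equiv.ofBijective hexagonVertex hexagonVertex_bijective
  map_rel_iff' := configGraphY_adj_hexagonVertex_iff _ _

/-- `D^2(S̄_3)` is isomorphic to the cycle graph on 6 vertices. -/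
theorem configGraphY_iso_cycle6 :
    Nonempty (configGraphY ≃g SimpleGraph.cycleGraph 6) :=
  ⟨cycleGraphIsoConfigGraphY.symm⟩
end

section
/- Let μ ≥ 1 and n ≥ 1 be natural numbers and let ν : Fin μ → ℕ. Then ∑_{f} ∑_{i : 0 < f(i) < n} ((ν i : ℤ) − 1) = ( C(n+μ−2, n−1) − 1 ) · ( (∑_i ν i) − μ ), where the outer sum ranges over all functions f : Fin μ → ℕ with ∑_i f(i) = n, the inner sum ranges over those indices i ∈ Fin μ with 0 < f(i) < n, and the identity is read in ℤ. -/
/-!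
Swap the two sums: each component `i` contributes `ν i - 1` once for every partition `f` with
`0 < f i < n`. Partitions with `f i > 0` correspond to partitions of `n - 1` (take one particle
out of component `i`), so by stars and bars there are `C(n+μ-2, n-1)` of them; exactly one of
them, all particles in component `i`, has `f i = n`.
-/

open Finset

namespace Finset.Nat

theorem card_antidiagonalTuple (k n : ℕ) :
    #(antidiagonalTuple k n) = (k + n - 1).choose n := by
  rw [card_eq_of_equiv_fintype ((Equiv.subtypeEquivRight fun _ => mem_antidiagonalTuple).trans
    (Sym.equivNatSumOfFintype (Fin k) n).symm), Sym.card_sym_eq_choose, Fintype.card_fin]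

theorem card_filter_pos_antidiagonalTuple_succ {k : ℕ} (i : Fin k) (n : ℕ) :
    #{f ∈ antidiagonalTuple k (n + 1) | 0 < f i} = #(antidiagonalTuple k n) := by
  rw [← card_map (s := antidiagonalTuple k n) (addLeftEmbedding (Pi.single i 1))]
  congr 1
  ext f
  simp only [mem_filter, mem_map, mem_antidiagonalTuple, addLeftEmbedding_apply]
  constructor
  · rintro ⟨hf, hfi⟩
    have hle : Pi.single i 1 ≤ f := by
      intro j
      rcases eq_or_ne j i with rfl | hj
      · simp only [Pi.single_eq_same]
        exact hfi
      · simp [Pi.single_eq_of_ne hj]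
    refine ⟨f - Pi.single i 1, ?_, add_tsub_cancel_of_le hle⟩
    have := congrArg (∑ j, · j) (add_tsub_cancel_of_le hle)
    simp only [Pi.add_apply, sum_add_distrib, Fintype.sum_pi_single', hf] at this
    omega
  · rintro ⟨g, hg, rfl⟩
    simp [sum_add_distrib, hg, add_comm]

theorem eq_piSingle_of_mem_antidiagonalTuple {k n : ℕ} {f : Fin k → ℕ} {i : Fin k}
    (hf : f ∈ antidiagonalTuple k n) (hfi : f i = n) : f = Pi.single i n := by
  rw [mem_antidiagonalTuple] at hf
  have hle : ∀ j ∈ univ, (Pi.single i n : Fin k → ℕ) j ≤ f j := by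
    intro j _
    rcases eq_or_ne j i with rfl | hj
    · simp [hfi]
    · simp [Pi.single_eq_of_ne hj]
  have hsum : ∑ j, (Pi.single i n : Fin k → ℕ) j = ∑ j, f j := by simp [hf]
  funext j
  exact ((sum_eq_sum_iff_of_le hle).1 hsum j (mem_univ j)).symm

theorem card_filter_pos_lt_antidiagonalTuple_add_one {k : ℕ} (i : Fin k) (n : ℕ) :
    #{f ∈ antidiagonalTuple k n | 0 < f i ∧ f i < n} + 1 = (k + n - 2).choose (n - 1) := by
  rcases n with _ | n
  · simp
  have hsplit : {f ∈ antidiagonalTuple k (n + 1) | 0 < f i ∧ f i < n + 1}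
      = {f ∈ antidiagonalTuple k (n + 1) | 0 < f i}.erase (Pi.single i (n + 1)) := by
    ext f
    simp only [mem_filter, mem_erase]
    constructor
    · rintro ⟨hf, hpos, hlt⟩
      exact ⟨by rintro rfl; simp at hlt, hf, hpos⟩
    · rintro ⟨hne, hf, hpos⟩
      refine ⟨hf, hpos, lt_of_le_of_ne ?_ fun h => hne (eq_piSingle_of_mem_antidiagonalTuple hf h)⟩
      rw [mem_antidiagonalTuple] at hf
      exact hf ▸ single_le_sum (fun j _ => Nat.zero_le (f j)) (mem_univ i)
  rw [hsplit, card_erase_add_one (by simp [mem_antidiagonalTuple]),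
    card_filter_pos_antidiagonalTuple_succ, card_antidiagonalTuple, Nat.add_sub_cancel,
    show k + (n + 1) - 2 = k + n - 1 by omega]

end Finset.Nat

open Finset.Nat

theorem gamma_n_cut_vertex_general (μ n : ℕ) (ν : Fin μ → ℕ) :
    ∑ f ∈ Finset.Nat.antidiagonalTuple μ n,
        ∑ i ∈ Finset.univ.filter (fun i : Fin μ => 0 < f i ∧ f i < n), ((ν i : ℤ) - 1)
      = (((n + μ - 2).choose (n - 1) : ℤ) - 1) * ((∑ i, (ν i : ℤ)) - μ) := by
  have hcount (i : Fin μ) :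
      (#{f ∈ antidiagonalTuple μ n | 0 < f i ∧ f i < n} : ℤ) = (n + μ - 2).choose (n - 1) - 1 := by
    rw [add_comm n, ← card_filter_pos_lt_antidiagonalTuple_add_one i n]
    push_cast
    ring
  calc _ = ∑ i, ∑ f ∈ antidiagonalTuple μ n, if 0 < f i ∧ f i < n then (ν i : ℤ) - 1 else 0 := by
        simp only [sum_filter]
        exact sum_comm
    _ = ∑ i, (((n + μ - 2).choose (n - 1) : ℤ) - 1) * ((ν i : ℤ) - 1) := by
        refine sum_congr rfl fun i _ => ?_
        rw [← sum_filter, sum_const, nsmul_eq_mul, hcount]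
    _ = _ := by
        rw [← mul_sum, sum_sub_distrib, sum_const, card_univ, Fintype.card_fin, nsmul_one]

/-- The paper's evaluation of `γ_n(v)`: summing `ν i − 1` over all partitions
`f` of `n` particles among `μ` components and all indices `i` whose component
holds at least one but not all particles gives
`(C(n+μ−2, n−1) − 1)·(ν − μ)` where `ν = ∑ i, ν i`. -/
theorem gamma_n_cut_vertex (μ n : ℕ) (hμ : 1 ≤ μ) (hn : 1 ≤ n) (ν : Fin μ → ℕ) :
    ∑ f ∈ Finset.Nat.antidiagonalTuple μ n,
        ∑ i ∈ Finset.univ.filter (fun i : Fin μ => 0 < f i ∧ f i < n), ((ν i : ℤ) - 1)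
      = (((n + μ - 2).choose (n - 1) : ℤ) - 1) * ((∑ i, (ν i : ℤ)) - μ) :=
  gamma_n_cut_vertex_general μ n ν
end

section
/- For every natural number n, 6·C(n+2, 4) − 4·C(n+1, 4) + C(n, 4) = 3·C(n+3, 4) − C(n+3, 3) + 1, as an identity of integers. -/
/-!
Since `k! · C(m, k) = m (m - 1) ⋯ (m - k + 1)`, multiplying both sides by `4! = 24` turns the
identity into an identity between polynomials in `n`, which is checked by ring normalization.
-/

open Nat

section

variable {R : Type*} [Ring R]

theorem cast_choose_mul_factorial (n k : ℕ) :
    (n.choose k : R) * k ! = (descPochhammer R k).eval (n : R) := by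
  rw [descPochhammer_eval_eq_descFactorial, descFactorial_eq_factorial_mul_choose]
  push_cast
  exact (Nat.cast_comm _ _).symm

theorem cast_choose_three_mul (n : ℕ) :
    (n.choose 3 : R) * 6 = n * (n - 1) * (n - 2) := by
  simpa [descPochhammer_succ_eval, factorial] using cast_choose_mul_factorial (R := R) n 3

theorem cast_choose_four_mul (n : ℕ) :
    (n.choose 4 : R) * 24 = n * (n - 1) * (n - 2) * (n - 3) := by
  simpa [descPochhammer_succ_eval, factorial] using cast_choose_mul_factorial (R := R) n 4

end

/-- `β_n^5`: the cycle-relation count `6·C(n+2,4) − 4·C(n+1,4) + C(n,4)` agrees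
with the specialization `E = 5` of the closed formula
`β_n^E = (E−2)·C(n+E−2, E−1) − C(n+E−2, E−2) + 1`. -/
theorem beta_n_five (n : ℕ) :
    6 * ((n + 2).choose 4 : ℤ) - 4 * ((n + 1).choose 4) + (n.choose 4)
      = 3 * ((n + 3).choose 4) - ((n + 3).choose 3) + 1 := by
  have h0 := cast_choose_four_mul (R := ℤ) n
  have h1 := cast_choose_four_mul (R := ℤ) (n + 1)
  have h2 := cast_choose_four_mul (R := ℤ) (n + 2)
  have h3 := cast_choose_four_mul (R := ℤ) (n + 3)
  have h := cast_choose_three_mul (R := ℤ) (n + 3)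
  push_cast at h1 h2 h3 h
  refine mul_left_cancel₀ (show (24 : ℤ) ≠ 0 by norm_num) ?_
  linear_combination 6 * h2 - 4 * h1 + h0 - 3 * h3 + 4 * h
end

section
/- Let E and k be natural numbers with 2 ≤ k ≤ E. Then, as an identity of integers, ∑_{i=1}^{k−2} (−1)^{k−i} · C(E, i) · C(E−i−1, k−i) = 1 − (−1)^k·C(E−1, k) + (E−k)·C(E, k−1) − C(E, k). -/
/-!
Chu–Vandermonde in the binomial ring `ℤ`, `C(k, k) = ∑ᵢ C(E, i) C(k - E, k - i)`, together with
upper negation `C(-a, n) = (-1)ⁿ C(a + n - 1, n)`, gives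
`∑_{i=0}^{k} (-1)^(k-i) C(E, i) C(E - i - 1, k - i) = 1`.
Splitting off the terms `i = 0, k - 1, k` leaves the claimed identity.
-/

open Finset

theorem Ring.choose_neg_natCast (a n : ℕ) :
    Ring.choose (-(a : ℤ)) n = (-1) ^ n * ((a + n - 1).choose n : ℤ) := by
  rw [Ring.choose_neg, Units.smul_def, Int.coe_negOnePow_natCast, smul_eq_mul]
  cases n with
  | zero => simp
  | succ n => rw [show (a : ℤ) + ↑(n + 1) - 1 = ↑(a + n) by push_cast; ring,
      Ring.choose_natCast, Nat.add_succ_sub_one]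

theorem sum_range_neg_one_pow_mul_choose_mul_choose_eq_one {E k : ℕ} (hk : k ≤ E) :
    ∑ i ∈ range (k + 1), (-1 : ℤ) ^ (k - i) * E.choose i * (E - i - 1).choose (k - i) = 1 := by
  have h := Ring.add_choose_eq (r := (E : ℤ)) (s := -((E - k : ℕ) : ℤ)) k (Commute.all _ _)
  rw [show (E : ℤ) + -((E - k : ℕ) : ℤ) = k by push_cast [hk]; ring, Ring.choose_natCast,
    Nat.choose_self, Nat.cast_one, Nat.sum_antidiagonal_eq_sum_range_succ_mk] at h
  refine .trans (sum_congr rfl fun i hi => ?_) h.symm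
  have hik : i ≤ k := Nat.lt_succ_iff.mp (mem_range.mp hi)
  rw [Ring.choose_natCast, Ring.choose_neg_natCast, show E - k + (k - i) - 1 = E - i - 1 by omega]
  ring

/-- The intermediate identity in the proof of the paper's Lemma 4:
`∑_{i=1}^{k−2} (−1)^{k−i}·C(E,i)·C(E−i−1, k−i)
  = 1 − (−1)^k·C(E−1,k) + (E−k)·C(E,k−1) − C(E,k)`. -/
theorem lemma4_intermediate (E k : ℕ) (h2 : 2 ≤ k) (hkE : k ≤ E) :
    ∑ i ∈ Finset.Icc 1 (k - 2),
        (-1 : ℤ) ^ (k - i) * (E.choose i) * ((E - i - 1).choose (k - i))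
      = 1 - (-1 : ℤ) ^ k * ((E - 1).choose k) + ((E : ℤ) - k) * (E.choose (k - 1))
        - (E.choose k) := by
  obtain ⟨j, rfl⟩ : ∃ j, k = j + 2 := ⟨k - 2, by omega⟩
  have h := sum_range_neg_one_pow_mul_choose_mul_choose_eq_one hkE
  rw [sum_range_succ, sum_range_succ, sum_range_eq_add_Ico _ (by omega),
    Ico_add_one_right_eq_Icc] at h
  simp only [Nat.sub_zero, Nat.sub_self, show j + 2 - (j + 1) = 1 by omega,
    show E - (j + 1) - 1 = E - (j + 2) by omega, Nat.choose_one_right, Nat.choose_zero_right,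
    pow_zero, pow_one] at h
  push_cast [hkE] at h ⊢
  linarith
end

section
/- Let V be a finite type with at least 3 elements and let Ω : V → V → V → ℝ be a 2-particle gauge potential, i.e. Ω i k j = −(Ω i j k) for all i, j, k. Then there exist a pure Aharonov–Bohm gauge potential Ω_AB and a pure statistics gauge potential Ω_S such that Ω i j k = Ω_AB i j k + Ω_S i j k whenever i, j, k are pairwise distinct; moreover the decomposition is unique in the sense that any two such pairs (Ω_AB, Ω_S) agree on all triples of pairwise distinct vertices. Explicitly, one may take Ω_AB i j k = (1/(|V|−2)) · ∑_{p ∉ {j,k}} Ω p j k. -/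
open Finset

/-- A 2-particle gauge potential: antisymmetric in its last two arguments. -/
def IsGaugePotential {V : Type*} (Ω : V → V → V → ℝ) : Prop :=
  ∀ i j k, Ω i k j = -(Ω i j k)

/-- A pure Aharonov–Bohm gauge potential: the phase for the move `j → k` does not
depend on the position of the stationary particle. -/
def IsPureAB {V : Type*} (Ω : V → V → V → ℝ) : Prop :=
  ∀ i i' j k, i ≠ j → i ≠ k → i' ≠ j → i' ≠ k → Ω i j k = Ω i' j k

/-- A pure statistics gauge potential: the phase for `j → k` averaged over all
positions of the stationary particle vanishes. -/
def IsPureStat {V : Type*} [Fintype V] [DecidableEq V] (Ω : V → V → V → ℝ) : Prop :=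
  ∀ j k, j ≠ k → ∑ i ∈ univ.filter (fun i => i ≠ j ∧ i ≠ k), Ω i j k = 0

/-!
Summing a decomposition `Ω = Ω_AB + Ω_S` over the positions `p ∉ {j, k}` of the stationary
particle kills `Ω_S` and multiplies the constant `Ω_AB _ j k` by `|V| - 2`, so `Ω_AB` must be the
average of `Ω` over those positions; conversely, `Ω` minus that average sums to zero there.
-/

section

variable {V : Type*} [Fintype V] [DecidableEq V]

def spectators (j k : V) : Finset V := univ.filter (fun p => p ≠ j ∧ p ≠ k)

@[simp]
lemma mem_spectators {j k p : V} : p ∈ spectators j k ↔ p ≠ j ∧ p ≠ k := by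
  simp [spectators]

lemma spectators_comm (j k : V) : spectators k j = spectators j k := by
  ext p; simp [and_comm]

lemma card_spectators {j k : V} (hjk : j ≠ k) :
    (#(spectators j k) : ℝ) = Fintype.card V - 2 := by
  have hset : spectators j k = univ \ {j, k} := by ext p; simp
  have hpair : #({j, k} : Finset V) = 2 := card_pair hjk
  rw [hset, card_sdiff_of_subset (subset_univ _), card_univ, hpair,
    Nat.cast_sub (hpair ▸ card_le_univ _)]
  norm_num

noncomputable def abPart (Ω : V → V → V → ℝ) : V → V → V → ℝ :=
  fun _ j k => 1 / ((Fintype.card V : ℝ) - 2) * ∑ p ∈ spectators j k, Ω p j k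

noncomputable def statPart (Ω : V → V → V → ℝ) : V → V → V → ℝ :=
  fun i j k => Ω i j k - abPart Ω i j k

lemma IsGaugePotential.sum_spectators_swap {Ω : V → V → V → ℝ} (hΩ : IsGaugePotential Ω)
    (j k : V) : ∑ p ∈ spectators k j, Ω p k j = -∑ p ∈ spectators j k, Ω p j k := by
  rw [spectators_comm, ← sum_neg_distrib]
  exact sum_congr rfl fun p _ => hΩ p j k

lemma IsGaugePotential.abPart {Ω : V → V → V → ℝ} (hΩ : IsGaugePotential Ω) :
    IsGaugePotential (abPart Ω) := by
  intro i j k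
  simp only [_root_.abPart, hΩ.sum_spectators_swap j k, mul_neg]

lemma IsGaugePotential.statPart {Ω : V → V → V → ℝ} (hΩ : IsGaugePotential Ω) :
    IsGaugePotential (statPart Ω) := by
  intro i j k
  simp only [_root_.statPart, hΩ i j k, hΩ.abPart i j k, neg_sub_neg, neg_sub]

lemma isPureAB_abPart (Ω : V → V → V → ℝ) : IsPureAB (abPart Ω) :=
  fun _ _ _ _ _ _ _ _ => rfl

lemma isPureStat_statPart (Ω : V → V → V → ℝ) : IsPureStat (statPart Ω) := by
  intro j k hjk
  change ∑ p ∈ spectators j k, (Ω p j k - abPart Ω p j k) = 0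
  simp only [abPart, sum_sub_distrib, sum_const, nsmul_eq_mul, ← card_spectators hjk]
  -- With no spectators the factor `1 / (|V| - 2)` is the junk value `1 / 0`, but the sum is empty.
  by_cases hs : spectators j k = ∅
  · simp [hs]
  · have hcard : (#(spectators j k) : ℝ) ≠ 0 := by simpa using hs
    field_simp
    ring

lemma IsPureAB.sum_spectators {B : V → V → V → ℝ} (hB : IsPureAB B) {i j k : V}
    (hij : i ≠ j) (hik : i ≠ k) :
    ∑ p ∈ spectators j k, B p j k = #(spectators j k) * B i j k := by
  rw [← nsmul_eq_mul, ← sum_const]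
  refine sum_congr rfl fun p hp => ?_
  obtain ⟨hpj, hpk⟩ := mem_spectators.1 hp
  exact hB p i j k hpj hpk hij hik

lemma eq_abPart_of_eq_add {Ω B T : V → V → V → ℝ} (hB : IsPureAB B) (hT : IsPureStat T)
    (hΩ : ∀ i j k, i ≠ j → i ≠ k → j ≠ k → Ω i j k = B i j k + T i j k)
    {i j k : V} (hij : i ≠ j) (hik : i ≠ k) (hjk : j ≠ k) :
    B i j k = abPart Ω i j k := by
  have hT_sum : ∑ p ∈ spectators j k, T p j k = 0 := hT j k hjk
  have hsum : ∑ p ∈ spectators j k, Ω p j k = #(spectators j k) * B i j k := by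
    rw [sum_congr rfl fun p hp => hΩ p j k (mem_spectators.1 hp).1 (mem_spectators.1 hp).2 hjk,
      sum_add_distrib, hB.sum_spectators hij hik, hT_sum, add_zero]
  have hcard : (#(spectators j k) : ℝ) ≠ 0 :=
    Nat.cast_ne_zero.2 (card_ne_zero_of_mem (mem_spectators.2 ⟨hij, hik⟩))
  rw [abPart, hsum, ← card_spectators hjk]
  field_simp

end

theorem gauge_potential_decomposition_general {V : Type*} [Fintype V] [DecidableEq V]
    (Ω : V → V → V → ℝ) (hΩ : IsGaugePotential Ω) :
    (∃ ΩAB ΩS : V → V → V → ℝ,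
      IsGaugePotential ΩAB ∧ IsGaugePotential ΩS ∧ IsPureAB ΩAB ∧ IsPureStat ΩS ∧
      (∀ i j k, i ≠ j → i ≠ k → j ≠ k → Ω i j k = ΩAB i j k + ΩS i j k) ∧
      (∀ i j k, i ≠ j → i ≠ k → j ≠ k →
        ΩAB i j k = (1 / ((Fintype.card V : ℝ) - 2)) *
          ∑ p ∈ univ.filter (fun p => p ≠ j ∧ p ≠ k), Ω p j k)) ∧
    (∀ ΩAB₁ ΩS₁ ΩAB₂ ΩS₂ : V → V → V → ℝ,
      IsGaugePotential ΩAB₁ → IsGaugePotential ΩS₁ → IsPureAB ΩAB₁ → IsPureStat ΩS₁ →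
      (∀ i j k, i ≠ j → i ≠ k → j ≠ k → Ω i j k = ΩAB₁ i j k + ΩS₁ i j k) →
      IsGaugePotential ΩAB₂ → IsGaugePotential ΩS₂ → IsPureAB ΩAB₂ → IsPureStat ΩS₂ →
      (∀ i j k, i ≠ j → i ≠ k → j ≠ k → Ω i j k = ΩAB₂ i j k + ΩS₂ i j k) →
      ∀ i j k, i ≠ j → i ≠ k → j ≠ k →
        ΩAB₁ i j k = ΩAB₂ i j k ∧ ΩS₁ i j k = ΩS₂ i j k) := by
  refine ⟨⟨abPart Ω, statPart Ω, hΩ.abPart, hΩ.statPart, isPureAB_abPart Ω,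
    isPureStat_statPart Ω, fun i j k _ _ _ => (add_sub_cancel _ _).symm,
    fun _ _ _ _ _ _ => rfl⟩, ?_⟩
  intro B₁ T₁ B₂ T₂ _ _ hB₁ hT₁ hΩ₁ _ _ hB₂ hT₂ hΩ₂ i j k hij hik hjk
  have hB : B₁ i j k = B₂ i j k := by
    rw [eq_abPart_of_eq_add hB₁ hT₁ hΩ₁ hij hik hjk, eq_abPart_of_eq_add hB₂ hT₂ hΩ₂ hij hik hjk]
  refine ⟨hB, ?_⟩
  linarith [hΩ₁ i j k hij hik hjk, hΩ₂ i j k hij hik hjk]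

/-- Every 2-particle gauge potential decomposes uniquely (on triples of pairwise
distinct vertices) as a sum of a pure Aharonov–Bohm and a pure statistics gauge
potential; explicitly one may take
`Ω_AB i j k = (1/(|V|−2))·∑_{p ∉ {j,k}} Ω p j k`. -/
theorem gauge_potential_decomposition {V : Type*} [Fintype V] [DecidableEq V]
    (hV : 3 ≤ Fintype.card V) (Ω : V → V → V → ℝ) (hΩ : IsGaugePotential Ω) :
    (∃ ΩAB ΩS : V → V → V → ℝ,
      IsGaugePotential ΩAB ∧ IsGaugePotential ΩS ∧ IsPureAB ΩAB ∧ IsPureStat ΩS ∧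
      (∀ i j k, i ≠ j → i ≠ k → j ≠ k → Ω i j k = ΩAB i j k + ΩS i j k) ∧
      (∀ i j k, i ≠ j → i ≠ k → j ≠ k →
        ΩAB i j k = (1 / ((Fintype.card V : ℝ) - 2)) *
          ∑ p ∈ univ.filter (fun p => p ≠ j ∧ p ≠ k), Ω p j k)) ∧
    (∀ ΩAB₁ ΩS₁ ΩAB₂ ΩS₂ : V → V → V → ℝ,
      IsGaugePotential ΩAB₁ → IsGaugePotential ΩS₁ → IsPureAB ΩAB₁ → IsPureStat ΩS₁ →
      (∀ i j k, i ≠ j → i ≠ k → j ≠ k → Ω i j k = ΩAB₁ i j k + ΩS₁ i j k) →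
      IsGaugePotential ΩAB₂ → IsGaugePotential ΩS₂ → IsPureAB ΩAB₂ → IsPureStat ΩS₂ →
      (∀ i j k, i ≠ j → i ≠ k → j ≠ k → Ω i j k = ΩAB₂ i j k + ΩS₂ i j k) →
      ∀ i j k, i ≠ j → i ≠ k → j ≠ k →
        ΩAB₁ i j k = ΩAB₂ i j k ∧ ΩS₁ i j k = ΩS₂ i j k) :=
  gauge_potential_decomposition_general Ω hΩ
end

section
/- Let G be a simple graph on a vertex type V, let ω : V → V → ℝ satisfy ω j i = −(ω i j), and let Ω_S : V → V → V → ℝ be antisymmetric in its last two arguments and satisfy the square relations: for all pairwise distinct i, j, k, l with i adjacent to k and j adjacent to l, Ω_S i j l + Ω_S l i k + Ω_S k l j + Ω_S j k i = 0. For a finite set S of vertices and vertices u, v ∉ S, define Ω⁽ⁿ⁾(S, u, v) = ω u v + ∑_{w ∈ S} Ω_S w u v. Then for every finite set S ⊆ V and all pairwise distinct vertices i, j, k, l not in S with i adjacent to k and j adjacent to l, Ω⁽ⁿ⁾(S ∪ {i}, j, l) + Ω⁽ⁿ⁾(S ∪ {l}, i, k) + Ω⁽ⁿ⁾(S ∪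 {k}, l, j) + Ω⁽ⁿ⁾(S ∪ {j}, k, i) = 0. -/
open Finset

/-- The phase `Ω⁽ⁿ⁾(S, u, v)` of the move `u → v` while the other particles sit at `S`. -/
def nParticlePotential {V : Type*} (ω : V → V → ℝ) (ΩS : V → V → V → ℝ) (S : Finset V)
    (u v : V) : ℝ :=
  ω u v + ∑ w ∈ S, ΩS w u v

section nParticlePotential

variable {V : Type*} {ω : V → V → ℝ} {ΩS : V → V → V → ℝ}

theorem nParticlePotential_insert [DecidableEq V] {S : Finset V} {w : V} (hw : w ∉ S)
    (u v : V) :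
    nParticlePotential ω ΩS (insert w S) u v = nParticlePotential ω ΩS S u v + ΩS w u v := by
  rw [nParticlePotential, nParticlePotential, sum_insert hw]
  ring

theorem nParticlePotential_swap (hω : ∀ i j, ω j i = -(ω i j))
    (hA : ∀ i j k, ΩS i k j = -(ΩS i j k)) (S : Finset V) (u v : V) :
    nParticlePotential ω ΩS S v u = -nParticlePotential ω ΩS S u v := by
  simp only [nParticlePotential, hω u v, hA _ u v, sum_neg_distrib, neg_add]

end nParticlePotential

/-- Given a one-particle (Aharonov–Bohm) gauge potential `ω` on a graph `G` and a
pure statistics 2-particle gauge potential `Ω_S` satisfying the square relations,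
the `n`-particle gauge potential
`Ω⁽ⁿ⁾(S, u, v) = ω u v + ∑_{w ∈ S} Ω_S w u v`
has zero flux through every 2-cell of the `n`-particle combinatorial configuration
space, i.e. is a topological gauge potential. -/
theorem nParticle_gauge_potential_topological {V : Type*} [DecidableEq V]
    (G : SimpleGraph V)
    (ω : V → V → ℝ) (hω : ∀ i j, ω j i = -(ω i j))
    (ΩS : V → V → V → ℝ) (hA : ∀ i j k, ΩS i k j = -(ΩS i j k))
    (hSq : ∀ i j k l : V, i ≠ j → i ≠ k → i ≠ l → j ≠ k → j ≠ l → k ≠ l →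
      G.Adj i k → G.Adj j l →
      ΩS i j l + ΩS l i k + ΩS k l j + ΩS j k i = 0) :
    ∀ (S : Finset V) (i j k l : V), i ∉ S → j ∉ S → k ∉ S → l ∉ S →
      i ≠ j → i ≠ k → i ≠ l → j ≠ k → j ≠ l → k ≠ l →
      G.Adj i k → G.Adj j l →
      (ω j l + ∑ w ∈ insert i S, ΩS w j l) + (ω i k + ∑ w ∈ insert l S, ΩS w i k) +
      (ω l j + ∑ w ∈ insert k S, ΩS w l j) + (ω k i + ∑ w ∈ insert j S, ΩS w k i) = 0 := by
  intro S i j k l hi hj hk hl hij hik hil hjk hjl hkl hik' hjl'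
  -- The fluxes of the `n - 2` stationary particles and of `ω` cancel along the square,
  -- leaving the two-particle square relation for the moving pair.
  change nParticlePotential ω ΩS (insert i S) j l + nParticlePotential ω ΩS (insert l S) i k +
      nParticlePotential ω ΩS (insert k S) l j + nParticlePotential ω ΩS (insert j S) k i = 0
  rw [nParticlePotential_insert hi, nParticlePotential_insert hl, nParticlePotential_insert hk,
    nParticlePotential_insert hj, nParticlePotential_swap hω hA S l j,
    nParticlePotential_swap hω hA S k i]
  linear_combination hSq i j k l hij hik hil hjk hjl hkl hik' hjl'
end
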